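/- arXiv:1710.07511 — 2 statements merged into one kernel-verified Lean document; each statement's English description precedes it below -/
import Mathlib

section
/- There exists λ > 0 and a Borel probability measure M on X such that L_{-βc}* M = λ M, where L_{-βc}* is the dual of the Haar-Ruelle operator acting on measures; moreover one can take λ = ∫ L_{-βc}(1) dM. -/
open MeasureTheory

/-- Concatenation `j * x = (j, x₁, x₂, …)` on `X = {1,…,d}^ℕ`. -/
def cons {d : ℕ} (j : Fin d) (x : ℕ → Fin d) : ℕ → Fin d :=
  fun n => match n with
  | 0 => j
  | Nat.succ m => x m

/-- The Haar-Ruelle operator. -/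
noncomputable def haarRuelle {d k : ℕ} (ψ : (ℕ → Fin d) → Fin k → (ℕ → Fin d))
    (c : (ℕ → Fin d) → (ℕ → Fin d) → ℝ) (β : ℝ)
    (f : (ℕ → Fin d) → ℝ) (x : ℕ → Fin d) : ℝ :=
  (1 / d) * ∑ j : Fin d, ∑ i : Fin k,
    f (ψ (cons j x) i) * Real.exp (-β * c (cons j x) (ψ (cons j x) i))

/-!
The Haar–Ruelle operator is a transfer operator `L f x = ∑_q w_q x * f (T_q x)` with continuous,
strictly positive weights on a compact space. Instead of a fixed point theorem we use Patterson's
construction. Let `ρ_n = (L^*)^n δ_y` and let `r` be the exponential growth rate of the masses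
`a_n = ρ_n(X)`; it is positive because `L 1` is bounded below. For `x` slightly below `r` the
series `∑ a_m x^(-m)` diverges, yet its partial sums cannot grow geometrically, so some cut-off `N`
makes the truncated series `∑_{m<N} x^(-m) ρ_m` large compared with its boundary term
`x^(-N) ρ_N`. Normalised, it is an approximate eigenmeasure: by telescoping, `L^* P - x P` only
sees the two boundary terms. Weak-* compactness of the probability measures on `X` turns the
approximate eigenmeasures into an exact one, and testing against `1` identifies the eigenvalue.
-/

open Filter Topology Finset

lemma Continuous.integrable_of_compactSpace {X : Type*} [TopologicalSpace X] [CompactSpace X]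
    [MeasurableSpace X] [OpensMeasurableSpace X] (μ : Measure X) [IsFiniteMeasure μ] {f : X → ℝ}
    (hf : Continuous f) : Integrable f μ :=
  hf.integrable_of_hasCompactSupport (.of_compactSpace _)

lemma abs_integral_le_norm_mul {X : Type*} [TopologicalSpace X] [CompactSpace X]
    [MeasurableSpace X] (μ : Measure X) [IsFiniteMeasure μ] (f : C(X, ℝ)) :
    |∫ y, f y ∂μ| ≤ ‖f‖ * μ.real Set.univ :=
  norm_integral_le_of_norm_le_const (Eventually.of_forall f.norm_coe_le_norm)

/-- For positive `a` this is `limsup a n ^ (1 / n)`. As `sInf ∅ = 0`, the lemmas below assume a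
bound `a n ≤ C ^ n`, which makes the set nonempty. -/
noncomputable def growthRate (a : ℕ → ℝ) : ℝ :=
  sInf {s | 0 < s ∧ ∃ K, ∀ n, a n ≤ K * s ^ n}

section GrowthRate

variable {a : ℕ → ℝ} {C δ s t x ε : ℝ}

lemma growthRate_nonneg : 0 ≤ growthRate a :=
  Real.sInf_nonneg fun _ hs => hs.1.le

lemma le_growthRate (hlow : ∀ n, δ ^ n ≤ a n) (hC : 0 < C) (hup : ∀ n, a n ≤ C ^ n) :
    δ ≤ growthRate a := by
  refine le_csInf ⟨C, hC, 1, fun n => by simpa using hup n⟩ ?_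
  rintro s ⟨hs, K, hK⟩
  by_contra! hsδ
  obtain ⟨n, hn⟩ := pow_unbounded_of_one_lt K ((one_lt_div hs).2 hsδ)
  rw [div_pow, lt_div_iff₀ (by positivity)] at hn
  linarith [(hlow n).trans (hK n)]

lemma exists_le_mul_pow_of_growthRate_lt (hC : 0 < C) (hup : ∀ n, a n ≤ C ^ n)
    (ht : growthRate a < t) : ∃ K, ∀ n, a n ≤ K * t ^ n := by
  obtain ⟨s, ⟨hs, K, hK⟩, hst⟩ := exists_lt_of_csInf_lt
    (s := {s | 0 < s ∧ ∃ K, ∀ n, a n ≤ K * s ^ n}) ⟨C, hC, 1, fun n => by simpa using hup n⟩ ht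
  refine ⟨max K 0, fun n => (hK n).trans ?_⟩
  calc K * s ^ n ≤ max K 0 * s ^ n := by gcongr; exact le_max_left _ _
    _ ≤ max K 0 * t ^ n := by gcongr

lemma tendsto_div_pow_of_growthRate_lt (ha : ∀ n, 0 ≤ a n) (hC : 0 < C)
    (hup : ∀ n, a n ≤ C ^ n) (hs : growthRate a < s) :
    Tendsto (fun n => a n / s ^ n) atTop (𝓝 0) := by
  obtain ⟨t, hat, hts⟩ := exists_between hs
  have ht : 0 < t := growthRate_nonneg.trans_lt hat
  have hs0 : 0 < s := ht.trans hts
  obtain ⟨K, hK⟩ := exists_le_mul_pow_of_growthRate_lt hC hup hat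
  have hgeom : Tendsto (fun n => K * (t / s) ^ n) atTop (𝓝 0) := by
    simpa using (tendsto_pow_atTop_nhds_zero_of_lt_one (by positivity)
      ((div_lt_one hs0).2 hts)).const_mul K
  refine squeeze_zero (fun n => div_nonneg (ha n) (by positivity)) (fun n => ?_) hgeom
  rw [div_pow, ← mul_div_assoc]
  exact div_le_div_of_nonneg_right (hK n) (by positivity)

lemma frequently_pow_lt_of_lt_growthRate (ht0 : 0 < t) (ht : t < growthRate a) :
    ∃ᶠ n in atTop, t ^ n < a n := by
  by_contra! h
  obtain ⟨K, hK⟩ : BddAbove (Set.range fun n => a n / t ^ n) :=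
    IsBoundedUnder.bddAbove_range
      ⟨1, eventually_map.2 <| h.mono fun n hn => (div_le_one (by positivity)).2 hn⟩
  refine ht.not_ge (csInf_le ⟨0, fun s hs => hs.1.le⟩ ⟨ht0, K, fun n => ?_⟩)
  have := hK (Set.mem_range_self n)
  rwa [div_le_iff₀ (by positivity)] at this

lemma tendsto_sum_div_pow_atTop (ha : ∀ n, 0 ≤ a n) (hx0 : 0 < x) (hx : x < growthRate a) :
    Tendsto (fun N => ∑ m ∈ range N, a m / x ^ m) atTop atTop := by
  refine (not_summable_iff_tendsto_nat_atTop_of_nonneg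
    fun n => div_nonneg (ha n) (by positivity)).1 fun hsum => ?_
  obtain ⟨n, hn, hlt⟩ := ((frequently_pow_lt_of_lt_growthRate hx0 hx).and_eventually
    ((hsum.tendsto_atTop_zero.eventually (gt_mem_nhds one_pos)))).exists
  rw [div_lt_one (by positivity)] at hlt
  exact hn.not_gt hlt

/-- Otherwise the partial sums grow like `(1 + ε) ^ N`, which forces `a N / x ^ N` to do the same,
i.e. `a N` to grow at rate `x * (1 + ε)`, beyond the growth rate. -/
lemma frequently_div_pow_le_mul_sum (ha : ∀ n, 0 < a n) (hC : 0 < C) (hup : ∀ n, a n ≤ C ^ n)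
    (hx0 : 0 < x) (hε : 0 < ε) (hx : growthRate a < x * (1 + ε)) :
    ∃ᶠ N in atTop, a N / x ^ N ≤ ε * ∑ m ∈ range N, a m / x ^ m := by
  set u : ℕ → ℝ := fun m => a m / x ^ m
  set S : ℕ → ℝ := fun N => ∑ m ∈ range N, u m
  by_contra! h
  obtain ⟨N₀, hN₀⟩ := eventually_atTop.1 (h.and (eventually_ge_atTop 1))
  have hS₀ : 0 < S N₀ :=
    sum_pos (fun m _ => div_pos (ha m) (by positivity))
      ⟨0, mem_range.2 (hN₀ N₀ le_rfl).2⟩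
  have hgrow (p : ℕ) : (1 + ε) ^ p * S N₀ ≤ S (N₀ + p) :=
    geom_le (u := fun p => S (N₀ + p)) (by positivity) p fun k _ => by
      have := (hN₀ (N₀ + k) (by omega)).1
      simp only [S, ← add_assoc, sum_range_succ]
      linarith
  have hbound : 0 < ε * S N₀ / (1 + ε) ^ N₀ := by positivity
  obtain ⟨p, hp⟩ := eventually_atTop.1
    ((tendsto_div_pow_of_growthRate_lt (fun n => (ha n).le) hC hup hx).eventually
      (gt_mem_nhds hbound))
  have hlt : u (N₀ + p) < ε * ((1 + ε) ^ p * S N₀) := by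
    have := hp (N₀ + p) (by omega)
    rw [mul_pow, ← div_div, pow_add (1 + ε) N₀ p,
      div_lt_div_iff₀ (by positivity) (by positivity)] at this
    refine lt_of_mul_lt_mul_right (a := (1 + ε) ^ N₀) ?_ (by positivity)
    linarith
  have hu := (hN₀ (N₀ + p) (by omega)).1
  nlinarith [hgrow p]

lemma exists_truncation_near_growthRate (hδ : 0 < δ) (hlow : ∀ n, δ ^ n ≤ a n) (hC : 0 < C)
    (hup : ∀ n, a n ≤ C ^ n) (hε : 0 < ε) :
    ∃ x N, 0 < x ∧ x ≤ growthRate a ∧ growthRate a - x ≤ ε ∧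
      1 ≤ ε * ∑ m ∈ range N, a m / x ^ m ∧ a N / x ^ N ≤ ε * ∑ m ∈ range N, a m / x ^ m := by
  set r := growthRate a
  have hr : 0 < r := hδ.trans_le (le_growthRate hlow hC hup)
  have ha (n : ℕ) : 0 < a n := (pow_pos hδ n).trans_le (hlow n)
  set η := ε / (1 + r)
  have hη : 0 < η := by positivity
  have hηε : η < ε := div_lt_self hε (by linarith)
  have hrη : r * η ≤ ε := by
    rw [mul_div_assoc', div_le_iff₀ (by positivity)]
    nlinarith
  set x := r / (1 + η)
  have hx : 0 < x := by positivity
  have hxr : x < r := div_lt_self hr (by linarith)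
  have hrx : r < x * (1 + ε) := by
    rw [div_mul_eq_mul_div, lt_div_iff₀ (by positivity)]
    nlinarith
  have hgap : r - x ≤ ε := by
    have : r - x = r * η / (1 + η) := by simp only [x]; field_simp; ring
    rw [this]
    exact (div_le_self (by positivity) (by linarith)).trans hrη
  obtain ⟨N, hlarge, hsmall⟩ :=
    (((tendsto_sum_div_pow_atTop (fun n => (ha n).le) hx hxr).eventually_ge_atTop
      ε⁻¹).and_frequently (frequently_div_pow_le_mul_sum ha hC hup hx hε hrx)).exists
  refine ⟨x, N, hx, hxr.le, hgap, ?_, hsmall⟩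
  rwa [inv_le_iff_one_le_mul₀ hε, mul_comm] at hlarge

end GrowthRate

section TransferOperator

variable {X Q : Type*} [TopologicalSpace X] [Fintype Q]

def transferOperator (T : Q → X → X) (w : Q → X → ℝ) (f : X → ℝ) (x : X) : ℝ :=
  ∑ q, w q x * f (T q x)

noncomputable def transferOperatorDual [MeasurableSpace X] (T : Q → X → X) (w : Q → X → ℝ)
    (μ : Measure X) : Measure X :=
  ∑ q, (μ.withDensity fun y => ENNReal.ofReal (w q y)).map (T q)

variable {T : Q → X → X} {w : Q → X → ℝ}

lemma continuous_transferOperator (hT : ∀ q, Continuous (T q)) (hw : ∀ q, Continuous (w q))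
    {f : X → ℝ} (hf : Continuous f) : Continuous (transferOperator T w f) :=
  continuous_finsetSum _ fun q _ => (hw q).mul (hf.comp (hT q))

variable [MeasurableSpace X] [BorelSpace X] [CompactSpace X] (μ : Measure X) [IsFiniteMeasure μ]

lemma isFiniteMeasure_transferOperatorDual (hw : ∀ q, Continuous (w q)) :
    IsFiniteMeasure (transferOperatorDual T w μ) := by
  have (q : Q) : IsFiniteMeasure (μ.withDensity fun y => ENNReal.ofReal (w q y)) :=
    isFiniteMeasure_withDensity_ofReal
      ((hw q).integrable_of_compactSpace μ).hasFiniteIntegral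
  unfold transferOperatorDual
  infer_instance

lemma integral_transferOperatorDual (hT : ∀ q, Continuous (T q)) (hw : ∀ q, Continuous (w q))
    (hw₀ : ∀ q y, 0 ≤ w q y) {f : X → ℝ} (hf : Continuous f) :
    ∫ y, f y ∂transferOperatorDual T w μ = ∫ y, transferOperator T w f y ∂μ := by
  have (q : Q) : IsFiniteMeasure (μ.withDensity fun y => ENNReal.ofReal (w q y)) :=
    isFiniteMeasure_withDensity_ofReal
      ((hw q).integrable_of_compactSpace μ).hasFiniteIntegral
  rw [transferOperatorDual, integral_finsetSum_measure fun q _ =>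
    hf.integrable_of_compactSpace _]
  unfold transferOperator
  rw [integral_finsetSum (f := fun q y => w q y * f (T q y)) _ fun q _ =>
    ((hw q).mul (hf.comp (hT q))).integrable_of_compactSpace μ]
  refine sum_congr rfl fun q _ => ?_
  rw [integral_map (hT q).aemeasurable hf.aestronglyMeasurable,
    integral_withDensity_eq_integral_toReal_smul (hw q).measurable.ennreal_ofReal
      (Eventually.of_forall fun _ => ENNReal.ofReal_lt_top)]
  simp [ENNReal.toReal_ofReal (hw₀ _ _)]

end TransferOperator

section PattersonSum

variable {X : Type*} [MeasurableSpace X] {ρ : ℕ → Measure X} {x : ℝ} {N : ℕ}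

noncomputable def pattersonSum (ρ : ℕ → Measure X) (x : ℝ) (N : ℕ) : Measure X :=
  ∑ m ∈ range N, (x ^ m)⁻¹.toNNReal • ρ m

lemma integral_pattersonSum (hx : 0 ≤ x) {f : X → ℝ} (hf : ∀ m, Integrable f (ρ m)) :
    ∫ y, f y ∂pattersonSum ρ x N = ∑ m ∈ range N, (x ^ m)⁻¹ * ∫ y, f y ∂ρ m := by
  rw [pattersonSum, integral_finsetSum_measure fun m _ => (hf m).smul_measure_nnreal]
  refine sum_congr rfl fun m _ => ?_
  rw [integral_smul_nnreal_measure, NNReal.smul_def, Real.coe_toNNReal _ (by positivity),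
    smul_eq_mul]

lemma integral_pattersonSum_sub (hx : 0 < x) {f g : X → ℝ} (hf : ∀ m, Integrable f (ρ m))
    (hg : ∀ m, Integrable g (ρ m)) (hρ : ∀ m, ∫ y, f y ∂ρ (m + 1) = ∫ y, g y ∂ρ m) :
    ∫ y, g y ∂pattersonSum ρ x N - x * ∫ y, f y ∂pattersonSum ρ x N =
      x * ((x ^ N)⁻¹ * ∫ y, f y ∂ρ N - ∫ y, f y ∂ρ 0) := by
  set u : ℕ → ℝ := fun m => (x ^ m)⁻¹ * ∫ y, f y ∂ρ m
  have hshift (m : ℕ) : (x ^ m)⁻¹ * ∫ y, g y ∂ρ m = x * u (m + 1) := by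
    simp only [u, ← hρ, pow_succ]
    field_simp
  rw [integral_pattersonSum hx.le hg, integral_pattersonSum hx.le hf,
    sum_congr rfl fun m _ => hshift m, ← mul_sum, ← mul_sub, ← sum_sub_distrib, sum_range_sub]
  simp [u]

variable [∀ m, IsFiniteMeasure (ρ m)]

instance : IsFiniteMeasure (pattersonSum ρ x N) := by
  unfold pattersonSum
  infer_instance

lemma measureReal_univ_pattersonSum (hx : 0 ≤ x) :
    (pattersonSum ρ x N).real Set.univ = ∑ m ∈ range N, (ρ m).real Set.univ / x ^ m := by
  simpa [div_eq_inv_mul] using integral_pattersonSum (N := N) hx (f := fun _ => (1 : ℝ))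
    fun m => integrable_const 1

end PattersonSum

section ApproximateEigenmeasure

variable {X : Type*} [TopologicalSpace X] [CompactSpace X] [MeasurableSpace X] [BorelSpace X]
  {ρ : ℕ → Measure X} [∀ m, IsFiniteMeasure (ρ m)] {L : C(X, ℝ) → C(X, ℝ)} {x : ℝ} {N : ℕ}

lemma abs_integral_pattersonSum_sub_le (hρ : ∀ m f, ∫ y, f y ∂ρ (m + 1) = ∫ y, L f y ∂ρ m)
    (hx : 0 < x) (f : C(X, ℝ)) :
    |∫ y, L f y ∂pattersonSum ρ x N - x * ∫ y, f y ∂pattersonSum ρ x N| ≤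
      x * ‖f‖ * ((ρ N).real Set.univ / x ^ N + (ρ 0).real Set.univ) := by
  rw [integral_pattersonSum_sub hx (fun m => f.continuous.integrable_of_compactSpace _)
    (fun m => (L f).continuous.integrable_of_compactSpace _) (hρ · f), abs_mul, abs_of_pos hx,
    mul_assoc]
  gcongr
  calc |(x ^ N)⁻¹ * ∫ y, f y ∂ρ N - ∫ y, f y ∂ρ 0|
      ≤ (x ^ N)⁻¹ * |∫ y, f y ∂ρ N| + |∫ y, f y ∂ρ 0| := by
        refine (abs_sub _ _).trans ?_
        rw [abs_mul, abs_of_pos (by positivity)]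
    _ ≤ (x ^ N)⁻¹ * (‖f‖ * (ρ N).real Set.univ) + ‖f‖ * (ρ 0).real Set.univ := by
        gcongr <;> exact abs_integral_le_norm_mul _ f
    _ = ‖f‖ * ((ρ N).real Set.univ / x ^ N + (ρ 0).real Set.univ) := by ring

lemma exists_probabilityMeasure_abs_integral_sub_le
    (hρ : ∀ m f, ∫ y, f y ∂ρ (m + 1) = ∫ y, L f y ∂ρ m) {δ C ε : ℝ} (hδ : 0 < δ)
    (hlow : ∀ n, δ ^ n ≤ (ρ n).real Set.univ) (hC : 0 < C)
    (hup : ∀ n, (ρ n).real Set.univ ≤ C ^ n) (hε : 0 < ε) :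
    ∃ P : ProbabilityMeasure X, ∀ f, |∫ y, L f y ∂P -
      growthRate (fun n => (ρ n).real Set.univ) * ∫ y, f y ∂P| ≤ ε * ‖f‖ := by
  set r := growthRate fun n => (ρ n).real Set.univ
  have hr : 0 < r := hδ.trans_le (le_growthRate hlow hC hup)
  set ε' := ε / (2 * r + 1)
  obtain ⟨x, N, hx, hxr, hgap, hlarge, hsmall⟩ :=
    exists_truncation_near_growthRate hδ hlow hC hup (show 0 < ε' by positivity)
  set ν := pattersonSum ρ x N
  set M := ν.real Set.univ
  rw [← measureReal_univ_pattersonSum hx.le] at hlarge hsmall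
  have hM : 0 < M := by nlinarith
  have hν : ν Set.univ ≠ 0 := fun h => by simp [M, measureReal_def, h] at hM
  have hP : IsProbabilityMeasure ((ν Set.univ)⁻¹ • ν) :=
    ⟨ENNReal.inv_mul_cancel hν (measure_ne_top _ _)⟩
  refine ⟨⟨_, hP⟩, fun f => ?_⟩
  have hint (g : X → ℝ) : ∫ y, g y ∂((ν Set.univ)⁻¹ • ν) = M⁻¹ * ∫ y, g y ∂ν := by
    rw [integral_smul_measure, ENNReal.toReal_inv, smul_eq_mul]
    rfl
  have hf : |∫ y, f y ∂((ν Set.univ)⁻¹ • ν)| ≤ ‖f‖ := by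
    simpa using abs_integral_le_norm_mul ((ν Set.univ)⁻¹ • ν) f
  have hE := abs_integral_pattersonSum_sub_le hρ hx f (N := N)
  have h0 : (ρ 0).real Set.univ ≤ 1 := by simpa using hup 0
  calc |∫ y, L f y ∂((ν Set.univ)⁻¹ • ν) - r * ∫ y, f y ∂((ν Set.univ)⁻¹ • ν)|
      = |M⁻¹ * (∫ y, L f y ∂ν - x * ∫ y, f y ∂ν) +
          (x - r) * ∫ y, f y ∂((ν Set.univ)⁻¹ • ν)| := by rw [hint, hint]; ring_nf
    _ ≤ M⁻¹ * (x * ‖f‖ * ((ρ N).real Set.univ / x ^ N + (ρ 0).real Set.univ)) +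
          ε' * ‖f‖ := by
        refine (abs_add_le _ _).trans (add_le_add ?_ ?_)
        · rw [abs_mul, abs_of_pos (inv_pos.2 hM)]
          gcongr
        · rw [abs_mul, abs_of_nonpos (by linarith)]
          gcongr
          linarith
    _ ≤ M⁻¹ * (r * ‖f‖ * (ε' * M + ε' * M)) + ε' * ‖f‖ := by
        gcongr
        linarith
    _ = ε * ‖f‖ := by
        simp only [ε']
        field_simp
        ring

lemma exists_eigenmeasure_of_forall_approx [T2Space X] {r : ℝ}
    (h : ∀ ε > 0, ∃ P : ProbabilityMeasure X, ∀ f,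
      |∫ y, L f y ∂P - r * ∫ y, f y ∂P| ≤ ε * ‖f‖) :
    ∃ M : ProbabilityMeasure X, ∀ f, ∫ y, L f y ∂M = r * ∫ y, f y ∂M := by
  set A : ℕ → Set (ProbabilityMeasure X) := fun n =>
    {P | ∀ f, |∫ y, L f y ∂P - r * ∫ y, f y ∂P| ≤ 1 / ((n : ℝ) + 1) * ‖f‖}
  have hA (n : ℕ) : IsClosed (A n) := by
    simp only [A, Set.ofPred_forall]
    exact isClosed_iInter fun f => isClosed_le
      ((ProbabilityMeasure.continuous_integral_continuousMap (L f)).sub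
        (continuous_const.mul (ProbabilityMeasure.continuous_integral_continuousMap f))).abs
      continuous_const
  have hmono (n : ℕ) : A (n + 1) ⊆ A n := fun P hP f => (hP f).trans <| by
    gcongr
    linarith
  obtain ⟨M, hM⟩ := IsCompact.nonempty_iInter_of_sequence_nonempty_isCompact_isClosed A hmono
    (fun n => h _ Nat.one_div_pos_of_nat) (hA 0).isCompact hA
  refine ⟨M, fun f => sub_eq_zero.1 (abs_nonpos_iff.1 ?_)⟩
  refine ge_of_tendsto' (x := atTop) ?_ fun n => Set.mem_iInter.1 hM n f
  simpa using tendsto_one_div_add_atTop_nhds_zero_nat.mul_const ‖f‖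

end ApproximateEigenmeasure

section Eigenmeasure

variable {X Q : Type*} [TopologicalSpace X] [CompactSpace X] [MeasurableSpace X] [BorelSpace X]
  [Fintype Q] {T : Q → X → X} {w : Q → X → ℝ}

lemma measureReal_univ_transferOperatorDual (hT : ∀ q, Continuous (T q))
    (hw : ∀ q, Continuous (w q)) (hw₀ : ∀ q y, 0 ≤ w q y) (μ : Measure X) [IsFiniteMeasure μ] :
    (transferOperatorDual T w μ).real Set.univ = ∫ y, transferOperator T w 1 y ∂μ := by
  have := isFiniteMeasure_transferOperatorDual (T := T) μ hw
  simpa using integral_transferOperatorDual μ hT hw hw₀ continuous_const (f := 1)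

theorem exists_eigenmeasure_transferOperator [T2Space X] [Nonempty X]
    (hT : ∀ q, Continuous (T q)) (hw : ∀ q, Continuous (w q)) (hw₀ : ∀ q y, 0 ≤ w q y)
    (hpos : ∀ y, 0 < transferOperator T w 1 y) :
    ∃ r > 0, ∃ M : ProbabilityMeasure X, ∀ f, Continuous f →
      ∫ y, transferOperator T w f y ∂M = r * ∫ y, f y ∂M := by
  have hL1 : Continuous (transferOperator T w 1) :=
    continuous_transferOperator hT hw continuous_const
  obtain ⟨y₁, -, hy₁⟩ := isCompact_univ.exists_isMinOn Set.univ_nonempty hL1.continuousOn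
  obtain ⟨y₂, -, hy₂⟩ := isCompact_univ.exists_isMaxOn Set.univ_nonempty hL1.continuousOn
  set δ := transferOperator T w 1 y₁
  set C := transferOperator T w 1 y₂
  set ρ : ℕ → Measure X := fun n => (transferOperatorDual T w)^[n] (Measure.dirac y₁)
  have hρ (n : ℕ) : ρ (n + 1) = transferOperatorDual T w (ρ n) :=
    Function.iterate_succ_apply' _ _ _
  have hfin (n : ℕ) : IsFiniteMeasure (ρ n) := by
    induction n with
    | zero => exact inferInstanceAs (IsFiniteMeasure (Measure.dirac y₁))
    | succ n ih => rw [hρ]; exact isFiniteMeasure_transferOperatorDual _ hw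
  have hmass (n : ℕ) : (ρ (n + 1)).real Set.univ = ∫ y, transferOperator T w 1 y ∂ρ n := by
    rw [hρ, measureReal_univ_transferOperatorDual hT hw hw₀]
  have hlow (n : ℕ) : δ ^ n ≤ (ρ n).real Set.univ := by
    simpa [ρ] using geom_le (u := fun n => (ρ n).real Set.univ) (hpos y₁).le n fun k _ => by
      rw [hmass, mul_comm, ← smul_eq_mul, ← integral_const]
      exact integral_mono (integrable_const δ) (hL1.integrable_of_compactSpace _)
        fun y => hy₁ trivial
  have hup (n : ℕ) : (ρ n).real Set.univ ≤ C ^ n := by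
    simpa [ρ] using le_geom (u := fun n => (ρ n).real Set.univ) (hpos y₂).le n fun k _ => by
      rw [hmass, mul_comm, ← smul_eq_mul, ← integral_const]
      exact integral_mono (hL1.integrable_of_compactSpace _) (integrable_const C)
        fun y => hy₂ trivial
  let L : C(X, ℝ) → C(X, ℝ) := fun f => ⟨_, continuous_transferOperator hT hw f.continuous⟩
  obtain ⟨M, hM⟩ := exists_eigenmeasure_of_forall_approx (L := L) fun ε hε =>
    exists_probabilityMeasure_abs_integral_sub_le
      (fun m f => by rw [hρ]; exact integral_transferOperatorDual _ hT hw hw₀ f.continuous)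
      (hpos y₁) hlow (hpos y₂) hup hε
  exact ⟨_, (hpos y₁).trans_le (le_growthRate hlow (hpos y₂) hup), M, fun f hf => hM ⟨f, hf⟩⟩

end Eigenmeasure

lemma continuous_cons {d : ℕ} (j : Fin d) : Continuous (cons j) :=
  continuous_pi fun n => by
    cases n with
    | zero => exact continuous_const
    | succ m => exact continuous_apply m

lemma haarRuelle_eq_transferOperator {d k : ℕ} (ψ : (ℕ → Fin d) → Fin k → (ℕ → Fin d))
    (c : (ℕ → Fin d) → (ℕ → Fin d) → ℝ) (β : ℝ) (f : (ℕ → Fin d) → ℝ) :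
    haarRuelle ψ c β f = transferOperator (fun (q : Fin d × Fin k) x => ψ (cons q.1 x) q.2)
      (fun q x => 1 / d * Real.exp (-β * c (cons q.1 x) (ψ (cons q.1 x) q.2))) f := by
  ext x
  simp only [haarRuelle, transferOperator, Fintype.sum_prod_type, mul_sum]
  exact sum_congr rfl fun j _ => sum_congr rfl fun i _ => by ring

/-- There exist `λ > 0` and a Borel probability measure `M` with
`L_{-βc}* M = λ M`; moreover `λ = ∫ L_{-βc}(1) dM`. -/
theorem exists_eigenmeasure_haarRuelle {d k : ℕ} (hd : 0 < d) (hk : 0 < k)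
    (ψ : (ℕ → Fin d) → Fin k → (ℕ → Fin d))
    (hψ : ∀ i : Fin k, Continuous fun x => ψ x i)
    (c : (ℕ → Fin d) → (ℕ → Fin d) → ℝ)
    (hc : Continuous fun p : (ℕ → Fin d) × (ℕ → Fin d) => c p.1 p.2)
    (β : ℝ) :
    ∃ (lam : ℝ) (M : Measure (ℕ → Fin d)),
      0 < lam ∧ IsProbabilityMeasure M ∧
      (∀ f : (ℕ → Fin d) → ℝ, Continuous f →
          ∫ x, haarRuelle ψ c β f x ∂M = lam * ∫ x, f x ∂M) ∧
      lam = ∫ x, haarRuelle ψ c β (fun _ => 1) x ∂M := by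
  have : Nonempty (Fin d) := ⟨⟨0, hd⟩⟩
  have : Nonempty (Fin k) := ⟨⟨0, hk⟩⟩
  have hT (q : Fin d × Fin k) : Continuous fun x => ψ (cons q.1 x) q.2 :=
    (hψ q.2).comp (continuous_cons q.1)
  have hw (q : Fin d × Fin k) :
      Continuous fun x => 1 / (d : ℝ) * Real.exp (-β * c (cons q.1 x) (ψ (cons q.1 x) q.2)) :=
    continuous_const.mul <| Real.continuous_exp.comp <| continuous_const.mul <|
      hc.comp ((continuous_cons q.1).prodMk (hT q))
  obtain ⟨lam, hlam, M, hM⟩ := exists_eigenmeasure_transferOperator hT hw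
    (fun q y => by positivity)
    (fun y => sum_pos (fun q _ => by simp only [Pi.one_apply]; positivity) univ_nonempty)
  simp only [← haarRuelle_eq_transferOperator] at hM
  exact ⟨lam, M, hlam, inferInstance, hM, by simp [hM _ continuous_const]⟩
end

section
/- For a separable cocycle c(x,y) = V(y) − V(x) with V continuous, any eigenmeasure of the dual separable Haar-Ruelle operator is quasi-invariant: if L_{-βV}* M = λ M with λ > 0, then for all continuous h : G → ℝ, ∫ Σ_{t=1}^k h(ψ_t(x), x) e^{-βV(ψ_t(x))} dM(x) = ∫ Σ_{t=1}^k h(x, ψ_t(x)) e^{-βV(ψ_t(x))} dM(x). -/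
open MeasureTheory

/-- The separable Haar-Ruelle operator
`L_{-βV} f (x) = (1/d) Σ_j Σ_i f(ψ_i(j*x)) e^{-β V(ψ_i(j*x))}`. -/
noncomputable def sepHaarRuelle {d k : ℕ} (ψ : (ℕ → Fin d) → Fin k → (ℕ → Fin d))
    (V : (ℕ → Fin d) → ℝ) (β : ℝ)
    (f : (ℕ → Fin d) → ℝ) (x : ℕ → Fin d) : ℝ :=
  (1 / d) * ∑ j : Fin d, ∑ i : Fin k,
    f (ψ (cons j x) i) * Real.exp (-β * V (ψ (cons j x) i))

/-- For the separable cocycle `c(x,y) = V(y) − V(x)`, any eigenmeasure of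
the dual separable Haar-Ruelle operator is quasi-invariant. -/
theorem sep_eigenmeasure_is_quasiInvariant {d k : ℕ} (hd : 0 < d)
    (r : (ℕ → Fin d) → (ℕ → Fin d) → Prop) (hr : Equivalence r)
    (ψ : (ℕ → Fin d) → Fin k → (ℕ → Fin d))
    (hψmem : ∀ (x : ℕ → Fin d) (i : Fin k), r (ψ x i) x)
    (habs : ∀ (x : ℕ → Fin d) (a b : Fin k), ψ (ψ x b) a = ψ x a)
    (hψinv : ∀ x y : ℕ → Fin d, r x y → ψ x = ψ y)
    (hψcont : ∀ i : Fin k, Continuous fun x => ψ x i)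
    (V : (ℕ → Fin d) → ℝ) (hV : Continuous V)
    (β lam : ℝ) (hlam : 0 < lam)
    (M : Measure (ℕ → Fin d)) (hM : IsProbabilityMeasure M)
    (heig : ∀ f : (ℕ → Fin d) → ℝ, Continuous f →
        ∫ x, sepHaarRuelle ψ V β f x ∂M = lam * ∫ x, f x ∂M) :
    ∀ h : (ℕ → Fin d) → (ℕ → Fin d) → ℝ,
      Continuous (fun p : (ℕ → Fin d) × (ℕ → Fin d) => h p.1 p.2) →
      ∫ x, ∑ t : Fin k, h (ψ x t) x * Real.exp (-β * V (ψ x t)) ∂M =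
        ∫ x, ∑ t : Fin k, h x (ψ x t) * Real.exp (-β * V (ψ x t)) ∂M := by
  intro h hh
  set F : (ℕ → Fin d) → ℝ := fun x => ∑ t : Fin k, h (ψ x t) x * Real.exp (-β * V (ψ x t))
    with hFdef
  set G : (ℕ → Fin d) → ℝ := fun x => ∑ t : Fin k, h x (ψ x t) * Real.exp (-β * V (ψ x t))
    with hGdef
  have hexp : ∀ t : Fin k, Continuous fun x => Real.exp (-β * V (ψ x t)) := fun t =>
    (continuous_const.mul (hV.comp (hψcont t))).rexp
  have hF : Continuous F :=
    continuous_finset_sum _ fun t _ =>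
      ((hh.comp ((hψcont t).prodMk continuous_id)).mul (hexp t))
  have hG : Continuous G :=
    continuous_finset_sum _ fun t _ =>
      ((hh.comp (continuous_id.prodMk (hψcont t))).mul (hexp t))
  have key : ∀ x, sepHaarRuelle ψ V β F x = sepHaarRuelle ψ V β G x := by
    intro x
    unfold sepHaarRuelle
    congr 1
    apply Finset.sum_congr rfl
    intro j _
    simp only [hFdef, hGdef, habs, Finset.sum_mul]
    rw [Finset.sum_comm]
    exact Finset.sum_congr rfl fun i _ => Finset.sum_congr rfl fun t _ => by ring
  have h1 := heig F hF
  have h2 := heig G hG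
  have hint : ∫ x, sepHaarRuelle ψ V β F x ∂M = ∫ x, sepHaarRuelle ψ V β G x ∂M := by
    exact integral_congr_ae (Filter.Eventually.of_forall key)
  have := h1.symm.trans (hint.trans h2)
  exact mul_left_cancel₀ (ne_of_gt hlam) this
end
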